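/- Let a > 0 be a real number and define f : [0,∞) → [0,∞) by f(x) = 7x for 0 ≤ x ≤ a, f(x) = 8a − x for a ≤ x ≤ 8a, and f(x) = 0 for x ≥ 8a. Let U ⊆ (0, 8a) be any (possibly infinite) set such that for all x, y ∈ U with x < y we have 2x ≤ y. Then ∑_{x ∈ U} f(x) ≤ 24a (where the sum is interpreted as the supremum of finite partial sums, which is well-defined since f ≥ 0). -/
import Mathlib


noncomputable def f (a x : ℝ) : ℝ :=
  if x ≤ a then 7 * x else if x ≤ 8 * a then 8 * a - x else 0

noncomputable def g (a t : ℝ) : ℝ :=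
  if t ≤ a then 14 * t else if t ≤ 2 * a then 8 * a + 6 * t
  else if t ≤ 4 * a then 16 * a + 2 * t else 24 * a

lemma g_mono (a : ℝ) (ha : 0 < a) {s t : ℝ} (h : s ≤ t) : g a s ≤ g a t := by
  unfold g; split_ifs <;> linarith

lemma key (a t : ℝ) (ha : 0 < a) (ht : 0 < t) (ht8 : t < 8 * a) :
    f a t + g a (t / 2) ≤ g a t := by
  unfold f g; split_ifs <;> linarith

lemma g_le (a t : ℝ) (ha : 0 < a) (ht : t ≤ 8 * a) : g a t ≤ 24 * a := by
  unfold g; split_ifs <;> linarith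

lemma aux3 (a : ℝ) (ha : 0 < a) (U : Set ℝ) (hU : U ⊆ Set.Ioo 0 (8 * a))
    (hd : ∀ x ∈ U, ∀ y ∈ U, x < y → 2 * x ≤ y) :
    ∀ n (s : Finset ℝ), s.card = n → ↑s ⊆ U → ∀ t : ℝ, 0 < t →
      (∀ x ∈ s, x ≤ t) → ∑ x ∈ s, f a x ≤ g a t := by
  intro n
  induction n using Nat.strong_induction_on with
  | _ n ih =>
    intro s hcard hsU t ht hbnd
    rcases Finset.eq_empty_or_nonempty s with rfl | hne
    · simp only [Finset.sum_empty]
      unfold g; split_ifs <;> linarith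
    · have hmmem := s.max'_mem hne
      set m := s.max' hne with hm
      have hmU : m ∈ U := hsU hmmem
      obtain ⟨hm0, hm8⟩ := hU hmU
      have hsum : f a m + ∑ x ∈ s.erase m, f a x = ∑ x ∈ s, f a x :=
        Finset.add_sum_erase s _ hmmem
      have hsub : ∀ x ∈ s.erase m, x ≤ m / 2 := by
        intro x hx
        have hxs := Finset.mem_of_mem_erase hx
        have hxm : x < m := lt_of_le_of_ne (s.le_max' x hxs) (Finset.ne_of_mem_erase hx)
        have := hd x (hsU hxs) m hmU hxm
        linarith
      have h1 : ∑ x ∈ s.erase m, f a x ≤ g a (m / 2) := by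
        refine ih (s.erase m).card ?_ _ rfl (fun x hx => hsU (Finset.mem_of_mem_erase hx))
          _ (by linarith) hsub
        rw [← hcard]; exact Finset.card_erase_lt_of_mem hmmem
      have h2 := key a m ha hm0 hm8
      have h3 := g_mono a ha (hbnd m hmmem)
      linarith
  
theorem stmt3 (a : ℝ) (ha : 0 < a) (U : Set ℝ) (hU : U ⊆ Set.Ioo 0 (8 * a))
    (hdouble : ∀ x ∈ U, ∀ y ∈ U, x < y → 2 * x ≤ y)
    (s : Finset ℝ) (hs : ↑s ⊆ U) :
    ∑ x ∈ s, f a x ≤ 24 * a := by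
  rcases Finset.eq_empty_or_nonempty s with rfl | hne
  · simp; linarith
  · have hmmem := s.max'_mem hne
    have hmU : s.max' hne ∈ U := hs hmmem
    obtain ⟨hm0, hm8⟩ := hU hmU
    have := aux3 a ha U hU hdouble s.card s rfl hs (s.max' hne) hm0
      (fun x hx => s.le_max' x hx)
    have := g_le a (s.max' hne) ha (le_of_lt hm8)
    linarith
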